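/- arXiv:2210.08513 — 4 statements merged into one kernel-verified Lean document; each statement's English description precedes it below -/
import Mathlib

section
/- Let f : ℝ → ℝ be continuous with f(0) = 0, f(u) = o(u) as u → 0, and suppose u ↦ f(u)/|u| is non-decreasing on (-∞,0) and on (0,+∞). Then for all u ∈ ℝ, f(u)·u ≥ 2F(u) ≥ 0, where F(u) = ∫₀ᵘ f(t) dt. -/
/-! If `f t / t` is non-decreasing on `(0, ∞)` and tends to `0` at `0⁺`, then `f ≥ 0` there, and on
`[0, u]` the function `f` lies below the chord `t ↦ (f u / u) t`, whose integral is `f u * u / 2`.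
The negative half-line reduces to this case through the reflection `t ↦ -f (-t)`. -/

open Asymptotics Filter Set MeasureTheory Topology

theorem nonneg_of_monotoneOn_div {f : ℝ → ℝ} (hmono : MonotoneOn (fun t => f t / t) (Ioi 0))
    (hlim : Tendsto (fun t => f t / t) (𝓝[>] 0) (𝓝 0)) {t : ℝ} (ht : 0 < t) : 0 ≤ f t := by
  have hdiv : 0 ≤ f t / t := le_of_tendsto hlim <| by
    filter_upwards [Ioo_mem_nhdsGT ht] with s hs
    exact hmono hs.1 ht hs.2.le
  simpa using (le_div_iff₀ ht).mp hdiv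

theorem two_mul_integral_le_of_monotoneOn_div {f : ℝ → ℝ}
    (hmono : MonotoneOn (fun t => f t / t) (Ioi 0)) {u : ℝ} (hu : 0 ≤ u)
    (hint : IntervalIntegrable f volume 0 u) :
    2 * ∫ t in (0 : ℝ)..u, f t ≤ f u * u := by
  rcases hu.eq_or_lt with rfl | hu
  · simp
  have hchord : ∫ t in (0 : ℝ)..u, f t ≤ ∫ t in (0 : ℝ)..u, f u / u * t := by
    refine intervalIntegral.integral_mono_on_of_le_Ioo hu.le hint
      ((continuous_const.mul continuous_id).intervalIntegrable _ _) fun t ht => ?_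
    have := hmono ht.1 hu ht.2.le
    rwa [div_le_iff₀ ht.1] at this
  calc 2 * ∫ t in (0 : ℝ)..u, f t ≤ 2 * ∫ t in (0 : ℝ)..u, f u / u * t := by gcongr
    _ = f u * u := by
      rw [intervalIntegral.integral_const_mul, integral_id]
      field_simp
      ring

theorem integral_bounds_of_monotoneOn_div {f : ℝ → ℝ} (hf : Continuous f)
    (hmono : MonotoneOn (fun t => f t / t) (Ioi 0))
    (hlim : Tendsto (fun t => f t / t) (𝓝[>] 0) (𝓝 0)) {u : ℝ} (hu : 0 ≤ u) :
    2 * ∫ t in (0 : ℝ)..u, f t ≤ f u * u ∧ 0 ≤ ∫ t in (0 : ℝ)..u, f t := by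
  refine ⟨two_mul_integral_le_of_monotoneOn_div hmono hu (hf.intervalIntegrable _ _), ?_⟩
  simpa using intervalIntegral.integral_mono_on_of_le_Ioo hu intervalIntegrable_const
    (hf.intervalIntegrable _ _) fun t ht => nonneg_of_monotoneOn_div hmono hlim ht.1

theorem stmt0_general (f : ℝ → ℝ) (hf : Continuous f)
    (hlittle : f =o[nhds 0] (id : ℝ → ℝ))
    (hmono_neg : ∀ u v : ℝ, u < 0 → v < 0 → u ≤ v → f u / |u| ≤ f v / |v|)
    (hmono_pos : ∀ u v : ℝ, 0 < u → 0 < v → u ≤ v → f u / |u| ≤ f v / |v|) :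
    ∀ u : ℝ, f u * u ≥ 2 * ∫ t in (0:ℝ)..u, f t ∧ (∫ t in (0:ℝ)..u, f t) ≥ 0 := by
  have hlim : Tendsto (fun t => f t / t) (𝓝 0) (𝓝 0) := hlittle.tendsto_div_nhds_zero
  have hreflect : ∀ u : ℝ, ∫ t in (0 : ℝ)..-u, -f (-t) = ∫ t in (0 : ℝ)..u, f t := fun u => by
    rw [intervalIntegral.integral_neg, intervalIntegral.integral_comp_neg, neg_neg, neg_zero,
      intervalIntegral.integral_symm, neg_neg]
  intro u
  rcases le_total 0 u with hu | hu
  · exact integral_bounds_of_monotoneOn_div hf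
      (fun a (ha : 0 < a) b (hb : 0 < b) hab => by
        simpa [abs_of_pos ha, abs_of_pos hb] using hmono_pos a b ha hb hab)
      (hlim.mono_left nhdsWithin_le_nhds) hu
  · have hrefl := integral_bounds_of_monotoneOn_div (f := fun t => -f (-t)) (by fun_prop)
      (fun a (ha : 0 < a) b (hb : 0 < b) hab => by
        have := hmono_neg (-b) (-a) (by linarith) (by linarith) (by linarith)
        simp only [abs_neg, abs_of_pos ha, abs_of_pos hb] at this
        simpa only [neg_div, neg_le_neg_iff] using this)
      ((hlim.comp ((continuous_neg.tendsto' 0 0 neg_zero).mono_left nhdsWithin_le_nhds)).congr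
        fun t => by simp [div_neg, neg_div])
      (neg_nonneg.mpr hu)
    simpa [hreflect] using hrefl

theorem stmt0 (f : ℝ → ℝ) (hf : Continuous f) (hf0 : f 0 = 0)
    (hlittle : f =o[nhds 0] (id : ℝ → ℝ))
    (hmono_neg : ∀ u v : ℝ, u < 0 → v < 0 → u ≤ v → f u / |u| ≤ f v / |v|)
    (hmono_pos : ∀ u v : ℝ, 0 < u → 0 < v → u ≤ v → f u / |u| ≤ f v / |v|) :
    ∀ u : ℝ, f u * u ≥ 2 * ∫ t in (0:ℝ)..u, f t ∧ (∫ t in (0:ℝ)..u, f t) ≥ 0 :=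
  stmt0_general f hf hlittle hmono_neg hmono_pos
end

section
/- Let f : ℝ → ℝ be continuous with f(u)u ≥ 2F(u) ≥ 0 for all u, where F(u) = ∫₀ᵘ f(t) dt, and suppose f(s) ≥ (f(u)/|u|)·|s| for all s ≥ u whenever u ≠ 0. Then for all u ≠ 0, all t ≥ 0, and all v ∈ ℝ: F(u) - F(tu + v) ≤ -((t² - 1)/2 · u + t·v) · f(u). -/
/-!
Put `c = f u / |u|`. The monotonicity hypothesis gives `f ≥ c |·|` to the right of `u` and
`f ≤ c |·|` to the left of `u` (away from `0`), so in either orientation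
`F w - F u ≥ ∫ s in u..w, c |s| = c (w |w| - u |u|) / 2`. With `w = t u + v` this bound proves the
claim when `w` has the sign of `u`; otherwise `|w| ≤ |v|`, and `F w ≥ 0`, `2 F u ≤ f u * u` suffice.
-/

open MeasureTheory intervalIntegral

lemma integral_abs_from_zero (w : ℝ) : ∫ s in (0 : ℝ)..w, |s| = w * |w| / 2 := by
  rcases le_total 0 w with hw | hw
  · rw [integral_congr (g := fun s => s) fun s hs => abs_of_nonneg (by
      rw [Set.uIcc_of_le hw] at hs; exact hs.1)]
    rw [integral_id, abs_of_nonneg hw]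
    ring
  · rw [integral_congr (g := fun s => -s) fun s hs => abs_of_nonpos (by
      rw [Set.uIcc_of_ge hw] at hs; exact hs.2)]
    rw [intervalIntegral.integral_neg, integral_id, abs_of_nonpos hw]
    ring

lemma integral_abs (a b : ℝ) : ∫ s in a..b, |s| = (b * |b| - a * |a|) / 2 := by
  have hi : ∀ x : ℝ, IntervalIntegrable (|·|) volume 0 x :=
    fun x => continuous_abs.intervalIntegrable 0 x
  rw [← integral_interval_sub_left (hi b) (hi a), integral_abs_from_zero, integral_abs_from_zero]
  ring

lemma integral_le_integral_of_crossing {φ g : ℝ → ℝ} (hφ : Continuous φ) (hg : Continuous g)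
    {u : ℝ} (hright : ∀ s, u ≤ s → φ s ≤ g s) (hleft : ∀ᵐ s, s ≤ u → g s ≤ φ s) (w : ℝ) :
    ∫ s in u..w, φ s ≤ ∫ s in u..w, g s := by
  rcases le_total u w with huw | hwu
  · exact integral_mono_on huw (hφ.intervalIntegrable u w) (hg.intervalIntegrable u w)
      fun s hs => hright s hs.1
  · rw [integral_symm w, integral_symm w, neg_le_neg_iff]
    refine integral_mono_ae_restrict hwu (hg.intervalIntegrable w u) (hφ.intervalIntegrable w u) ?_
    filter_upwards [ae_restrict_of_ae hleft, ae_restrict_mem measurableSet_Icc] with s hs hsI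
    exact hs hsI.2

section RatioMonotone

variable {f : ℝ → ℝ} (hmono : ∀ u s : ℝ, u ≠ 0 → s ≥ u → f s ≥ (f u / |u|) * |s|)
include hmono

lemma le_div_abs_mul_abs_of_le {u s : ℝ} (hu : u ≠ 0) (hs : s ≠ 0) (hsu : s ≤ u) :
    f s ≤ f u / |u| * |s| := by
  have hratio : f s / |s| ≤ f u / |u| := (le_div_iff₀ (abs_pos.mpr hu)).mpr (hmono s u hs hsu)
  exact (div_le_iff₀ (abs_pos.mpr hs)).mp hratio

lemma div_abs_mul_integral_abs_le {u : ℝ} (hf : Continuous f) (hu : u ≠ 0) (w : ℝ) :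
    f u / |u| * ((w * |w| - u * |u|) / 2) ≤ ∫ s in u..w, f s := by
  rw [← integral_abs, ← intervalIntegral.integral_const_mul]
  refine integral_le_integral_of_crossing (continuous_const.mul continuous_abs) hf
    (fun s hs => hmono u s hu hs) ?_ w
  filter_upwards [volume.ae_ne 0] with s hs hsu
  exact le_div_abs_mul_abs_of_le hmono hu hs hsu

end RatioMonotone

lemma sub_le_of_abs_bound {c u v t Fu Fw : ℝ} (hu : u ≠ 0) (ht : 0 ≤ t)
    (hFu : 2 * Fu ≤ c * |u| * u) (hFu₀ : 0 ≤ Fu) (hFw₀ : 0 ≤ Fw)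
    (hdiff : c * (((t * u + v) * |t * u + v| - u * |u|) / 2) ≤ Fw - Fu) :
    Fu - Fw ≤ -(((t ^ 2 - 1) / 2) * u + t * v) * (c * |u|) := by
  rcases hu.lt_or_gt with hneg | hpos
  · rw [abs_of_neg hneg] at hFu hdiff ⊢
    have hc : c ≤ 0 := by nlinarith [mul_pos (neg_pos.mpr hneg) (neg_pos.mpr hneg)]
    rcases le_total (t * u + v) 0 with hw | hw
    · rw [abs_of_nonpos hw] at hdiff
      nlinarith [mul_nonneg (neg_nonneg.mpr hc) (sq_nonneg v)]
    · have htu : 0 ≤ t * -u := mul_nonneg ht (neg_nonneg.mpr hneg.le)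
      nlinarith [mul_nonneg (mul_nonneg (neg_nonneg.mpr hc) htu) hw,
        mul_nonneg (neg_nonneg.mpr hc) (sq_nonneg (t * u))]
  · rw [abs_of_pos hpos] at hFu hdiff ⊢
    have hc : 0 ≤ c := by nlinarith [mul_pos hpos hpos]
    rcases le_total 0 (t * u + v) with hw | hw
    · rw [abs_of_nonneg hw] at hdiff
      nlinarith [mul_nonneg hc (sq_nonneg v)]
    · nlinarith [mul_nonneg (mul_nonneg hc (mul_nonneg ht hpos.le)) (neg_nonneg.mpr hw),
        mul_nonneg hc (sq_nonneg (t * u))]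

theorem stmt1 (f F : ℝ → ℝ) (hf : Continuous f)
    (hF : ∀ u : ℝ, F u = ∫ t in (0:ℝ)..u, f t)
    (h1 : ∀ u : ℝ, f u * u ≥ 2 * F u ∧ 2 * F u ≥ 0)
    (h2 : ∀ u s : ℝ, u ≠ 0 → s ≥ u → f s ≥ (f u / |u|) * |s|) :
    ∀ u t v : ℝ, u ≠ 0 → t ≥ 0 →
      F u - F (t * u + v) ≤ -(((t ^ 2 - 1) / 2) * u + t * v) * f u := by
  intro u t v hu ht
  have hfu : f u = f u / |u| * |u| := (div_mul_cancel₀ _ (abs_ne_zero.mpr hu)).symm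
  have hdiff : F (t * u + v) - F u = ∫ s in u..t * u + v, f s := by
    rw [hF, hF, integral_interval_sub_left (hf.intervalIntegrable _ _) (hf.intervalIntegrable _ _)]
  obtain ⟨hFu, hFu₀⟩ := h1 u
  rw [hfu] at hFu ⊢
  exact sub_le_of_abs_bound hu ht hFu (by linarith) (by linarith [(h1 (t * u + v)).2])
    (hdiff ▸ div_abs_mul_integral_abs_le h2 hf hu (t * u + v))
end

section
/- Discrete Brézis–Lieb lemma: let V be a countable set with counting measure, 0 < p < ∞, and (u_n) ⊂ ℓᵖ(V) uniformly bounded in ℓᵖ-norm with u_n(x) → u(x) for every x ∈ V. Then lim_{n→∞} (‖u_n‖_p^p − ‖u_n − u‖_p^p) = ‖u‖_p^p. -/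
open Filter Topology

private lemma rpow_abs_add_le' (p : ℝ) (hp : 0 < p) (a b : ℝ) :
    |a + b| ^ p ≤ 2 ^ p * (|a| ^ p + |b| ^ p) := by
  have h1 : |a + b| ≤ 2 * max |a| |b| := by
    have := abs_add_le a b
    rcases le_total |a| |b| with h | h
    · rw [max_eq_right h]; linarith
    · rw [max_eq_left h]; linarith
  have h2 : (max |a| |b|) ^ p ≤ |a| ^ p + |b| ^ p := by
    rcases max_cases |a| |b| with ⟨he, _⟩ | ⟨he, _⟩ <;> rw [he]
    · nlinarith [Real.rpow_nonneg (abs_nonneg b) p]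
    · nlinarith [Real.rpow_nonneg (abs_nonneg a) p]
  calc |a + b| ^ p ≤ (2 * max |a| |b|) ^ p :=
        Real.rpow_le_rpow (abs_nonneg _) h1 hp.le
    _ = 2 ^ p * (max |a| |b|) ^ p :=
        Real.mul_rpow (by norm_num) (le_max_iff.mpr (Or.inl (abs_nonneg a)))
    _ ≤ 2 ^ p * (|a| ^ p + |b| ^ p) :=
        mul_le_mul_of_nonneg_left h2 (Real.rpow_nonneg (by norm_num) p)

private lemma rpow_split' (p : ℝ) (hp : 0 < p) {δ : ℝ} (hδ : 0 < δ) {s t : ℝ}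
    (hs : 0 ≤ s) (ht : 0 ≤ t) :
    (s + t) ^ p ≤ (1 + δ) ^ p * s ^ p + (1 + 1 / δ) ^ p * t ^ p := by
  rcases le_total t (δ * s) with h | h
  · have h1 : s + t ≤ (1 + δ) * s := by nlinarith
    calc (s + t) ^ p ≤ ((1 + δ) * s) ^ p := Real.rpow_le_rpow (by linarith) h1 hp.le
      _ = (1 + δ) ^ p * s ^ p := Real.mul_rpow (by linarith) hs
      _ ≤ _ := le_add_of_nonneg_right
          (mul_nonneg (Real.rpow_nonneg (by positivity) p) (Real.rpow_nonneg ht p))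
  · have h1 : s + t ≤ (1 + 1 / δ) * t := by
      have hst : s ≤ t / δ := (le_div_iff₀ hδ).mpr (by nlinarith)
      have : t / δ = (1 / δ) * t := by ring
      nlinarith
    calc (s + t) ^ p ≤ ((1 + 1 / δ) * t) ^ p := Real.rpow_le_rpow (by linarith) h1 hp.le
      _ = (1 + 1 / δ) ^ p * t ^ p := Real.mul_rpow (by positivity) ht
      _ ≤ _ := le_add_of_nonneg_left
          (mul_nonneg (Real.rpow_nonneg (by positivity) p) (Real.rpow_nonneg hs p))

/-- The Brézis–Lieb key inequality. -/
private lemma bl_key (p : ℝ) (hp : 0 < p) {ε : ℝ} (hε : 0 < ε) :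
    ∃ K : ℝ, 0 ≤ K ∧ ∀ a b : ℝ, |(|a + b| ^ p - |a| ^ p : ℝ)| ≤ ε * |a| ^ p + K * |b| ^ p := by
  have h2p : (0 : ℝ) < 2 ^ p := Real.rpow_pos_of_pos (by norm_num) p
  have h2p1 : (1 : ℝ) ≤ 2 ^ p := by
    calc (1 : ℝ) = 2 ^ (0 : ℝ) := (Real.rpow_zero 2).symm
      _ ≤ 2 ^ p := Real.rpow_le_rpow_of_exponent_le (by norm_num) hp.le
  set ε2 := ε / 2 ^ p with hε2def
  have hε2 : 0 < ε2 := by positivity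
  -- find δ > 0 with (1+δ)^p ≤ 1 + ε2
  obtain ⟨δ, hδ0, hδ⟩ : ∃ δ : ℝ, 0 < δ ∧ (1 + δ) ^ p ≤ 1 + ε2 := by
    have hc : ContinuousAt (fun δ : ℝ => (1 + δ) ^ p) 0 := by
      apply ContinuousAt.comp (g := fun y : ℝ => y ^ p)
      · exact Real.continuousAt_rpow_const _ _ (Or.inl (by norm_num))
      · exact (continuous_const.add continuous_id).continuousAt
    have hval : (fun δ : ℝ => (1 + δ) ^ p) 0 = 1 := by simp [Real.one_rpow]
    have hev : ∀ᶠ δ in 𝓝 (0 : ℝ), (1 + δ) ^ p < 1 + ε2 := by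
      apply hc.eventually_lt_const
      rw [hval]; linarith
    obtain ⟨r, hr0, hr⟩ := Metric.eventually_nhds_iff.mp hev
    refine ⟨r / 2, by positivity, le_of_lt (hr ?_)⟩
    simp only [Real.dist_eq, sub_zero]
    rw [abs_of_pos (by positivity)]
    linarith
  refine ⟨ε + (1 + 1 / δ) ^ p, by positivity, fun a b => ?_⟩
  have hA : 0 ≤ |a| ^ p := Real.rpow_nonneg (abs_nonneg a) p
  have hB : 0 ≤ |b| ^ p := Real.rpow_nonneg (abs_nonneg b) p
  have hS : 0 ≤ |a + b| ^ p := Real.rpow_nonneg (abs_nonneg _) p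
  have hεε2 : ε2 ≤ ε := by
    rw [hε2def, div_le_iff₀ h2p]; nlinarith
  -- upper bound
  have hup : |a + b| ^ p - |a| ^ p ≤ ε * |a| ^ p + (ε + (1 + 1 / δ) ^ p) * |b| ^ p := by
    have h1 : |a + b| ^ p ≤ (|a| + |b|) ^ p :=
      Real.rpow_le_rpow (abs_nonneg _) (abs_add_le a b) hp.le
    have h2 := rpow_split' p hp hδ0 (abs_nonneg a) (abs_nonneg b)
    have h3 : (1 + δ) ^ p * |a| ^ p ≤ (1 + ε2) * |a| ^ p :=
      mul_le_mul_of_nonneg_right hδ hA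
    nlinarith
  -- lower bound
  have hlow : |a| ^ p - |a + b| ^ p ≤ ε * |a| ^ p + (ε + (1 + 1 / δ) ^ p) * |b| ^ p := by
    have h0 : |a| ≤ |a + b| + |b| := by
      have := abs_add_le (a + b) (-b); simpa using this
    have h1 : |a| ^ p ≤ (|a + b| + |b|) ^ p :=
      Real.rpow_le_rpow (abs_nonneg _) h0 hp.le
    have h2 := rpow_split' p hp hδ0 (abs_nonneg (a + b)) (abs_nonneg b)
    have h3 : (1 + δ) ^ p * |a + b| ^ p ≤ (1 + ε2) * |a + b| ^ p :=
      mul_le_mul_of_nonneg_right hδ hS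
    have h4 := rpow_abs_add_le' p hp a b
    have h5 : ε2 * |a + b| ^ p ≤ ε2 * (2 ^ p * (|a| ^ p + |b| ^ p)) :=
      mul_le_mul_of_nonneg_left h4 hε2.le
    have h6 : ε2 * 2 ^ p = ε := by
      rw [hε2def]; field_simp
    nlinarith
  rw [abs_sub_le_iff]
  exact ⟨hup, by linarith⟩

theorem stmt7 (V : Type*) [Countable V] (p : ℝ) (hp : 0 < p)
    (u : ℕ → V → ℝ) (v : V → ℝ) (C : ℝ)
    (hsummable : ∀ n, Summable fun x => |u n x| ^ p)
    (hbdd : ∀ n, (∑' x, |u n x| ^ p) ≤ C)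
    (hptwise : ∀ x, Tendsto (fun n => u n x) atTop (nhds (v x))) :
    Tendsto (fun n => (∑' x, |u n x| ^ p) - ∑' x, |u n x - v x| ^ p) atTop
      (nhds (∑' x, |v x| ^ p)) := by
  have hcont : Continuous fun y : ℝ => |y| ^ p := by
    have h1 : Continuous fun y : ℝ => y ^ p := by
      rw [continuous_iff_continuousAt]
      exact fun x => Real.continuousAt_rpow_const x p (Or.inr hp.le)
    exact h1.comp continuous_abs
  have hnn : ∀ (w : V → ℝ) (x : V), 0 ≤ |w x| ^ p :=
    fun w x => Real.rpow_nonneg (abs_nonneg _) p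
  -- finite partial sums of |v|^p bounded by C
  have hfin : ∀ s : Finset V, ∑ x ∈ s, |v x| ^ p ≤ C := by
    intro s
    have ht : Tendsto (fun n => ∑ x ∈ s, |u n x| ^ p) atTop (𝓝 (∑ x ∈ s, |v x| ^ p)) :=
      tendsto_finset_sum s fun x _ => (hcont.tendsto (v x)).comp (hptwise x)
    exact le_of_tendsto ht (Eventually.of_forall fun n =>
      le_trans (Summable.sum_le_tsum s (fun x _ => hnn _ x) (hsummable n)) (hbdd n))
  have hv : Summable fun x => |v x| ^ p :=
    summable_of_sum_le (fun x => hnn v x) hfin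
  set L := ∑' x, |v x| ^ p with hLdef
  have hL0 : 0 ≤ L := tsum_nonneg fun x => hnn v x
  have hLC : L ≤ C := Summable.tsum_le_of_sum_le hv hfin
  have hC0 : 0 ≤ C := le_trans (tsum_nonneg fun x => hnn (u 0) x) (hbdd 0)
  -- summability of |u n - v|^p
  have hptle : ∀ n x, |u n x - v x| ^ p ≤ 2 ^ p * (|u n x| ^ p + |v x| ^ p) := by
    intro n x
    have := rpow_abs_add_le' p hp (u n x) (-(v x))
    simpa [sub_eq_add_neg] using this
  have hsubsum : ∀ n, Summable fun x => |u n x - v x| ^ p := fun n =>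
    Summable.of_nonneg_of_le (fun x => Real.rpow_nonneg (abs_nonneg _) p) (hptle n) (((hsummable n).add hv).mul_left _)
  set D := 2 ^ p * (C + L) with hDdef
  have h2p : (0 : ℝ) < 2 ^ p := Real.rpow_pos_of_pos (by norm_num) p
  have hD0 : 0 ≤ D := mul_nonneg h2p.le (by linarith)
  have hsubbdd : ∀ n, (∑' x, |u n x - v x| ^ p) ≤ D := by
    intro n
    calc (∑' x, |u n x - v x| ^ p)
        ≤ ∑' x, 2 ^ p * (|u n x| ^ p + |v x| ^ p) :=
          Summable.tsum_le_tsum (hptle n) (hsubsum n) (((hsummable n).add hv).mul_left _)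
      _ = 2 ^ p * ((∑' x, |u n x| ^ p) + L) := by
          rw [tsum_mul_left, Summable.tsum_add (hsummable n) hv]
      _ ≤ D := by
          rw [hDdef]
          exact mul_le_mul_of_nonneg_left (by linarith [hbdd n]) h2p.le
  -- the function h
  set h : ℕ → V → ℝ := fun n x => |u n x| ^ p - |u n x - v x| ^ p - |v x| ^ p with hhdef
  have hsumh : ∀ n, Summable (h n) := fun n => ((hsummable n).sub (hsubsum n)).sub hv
  have heq : ∀ n, (∑' x, h n x) = (∑' x, |u n x| ^ p) - (∑' x, |u n x - v x| ^ p) - L := by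
    intro n
    have e1 : (fun x => h n x) = fun x => |u n x| ^ p - (|u n x - v x| ^ p + |v x| ^ p) := by
      funext x; rw [hhdef]; ring
    calc (∑' x, h n x) = ∑' x, (|u n x| ^ p - (|u n x - v x| ^ p + |v x| ^ p)) := by rw [e1]
      _ = (∑' x, |u n x| ^ p) - ((∑' x, |u n x - v x| ^ p) + ∑' x, |v x| ^ p) := by
          rw [Summable.tsum_sub (hsummable n) ((hsubsum n).add hv), Summable.tsum_add (hsubsum n) hv]
      _ = (∑' x, |u n x| ^ p) - (∑' x, |u n x - v x| ^ p) - L := by rw [hLdef]; ring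
  -- pointwise convergence of h to 0
  have hhtend : ∀ x, Tendsto (fun n => |h n x|) atTop (𝓝 0) := by
    intro x
    have t1 : Tendsto (fun n => |u n x| ^ p) atTop (𝓝 (|v x| ^ p)) :=
      (hcont.tendsto (v x)).comp (hptwise x)
    have t2 : Tendsto (fun n => |u n x - v x| ^ p) atTop (𝓝 0) := by
      have h0 : Tendsto (fun m => u m x - v x) atTop (𝓝 0) := by
        simpa using (hptwise x).sub_const (v x)
      have := (hcont.tendsto 0).comp h0
      simpa [Function.comp_def, Real.zero_rpow hp.ne'] using this
    have t3 : Tendsto (fun n => h n x) atTop (𝓝 0) := by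
      have := (t1.sub t2).sub_const (|v x| ^ p)
      simpa [hhdef] using this
    simpa using t3.abs
  -- summability of |h n|
  have habs : ∀ n, Summable fun x => |h n x| := by
    intro n
    have hble : ∀ x, |h n x| ≤ |u n x| ^ p + |u n x - v x| ^ p + |v x| ^ p := by
      intro x
      have h1 := hnn (u n) x
      have h2 : 0 ≤ |u n x - v x| ^ p := Real.rpow_nonneg (abs_nonneg _) p
      have h3 := hnn v x
      have hx : h n x = |u n x| ^ p - |u n x - v x| ^ p - |v x| ^ p := by rw [hhdef]
      rw [abs_le]
      constructor <;> [linarith; linarith]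
    exact Summable.of_nonneg_of_le (fun x => abs_nonneg _) hble
      (((hsummable n).add (hsubsum n)).add hv)
  -- the key: ∑' |h n| → 0
  have key : Tendsto (fun n => ∑' x, |h n x|) atTop (𝓝 0) := by
    rw [Metric.tendsto_atTop]
    intro ε hε
    set ε' := ε / (2 * (D + 1)) with hε'def
    have hε' : 0 < ε' := by positivity
    obtain ⟨K, hK0, hKbl⟩ := bl_key p hp hε'
    have hpt : ∀ n x, |h n x| ≤ ε' * |u n x - v x| ^ p + (K + 1) * |v x| ^ p := by
      intro n x
      have hb := hKbl (u n x - v x) (v x)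
      rw [sub_add_cancel] at hb
      obtain ⟨h1a, h1b⟩ := abs_le.mp hb
      have h3 := hnn v x
      have hx : h n x = |u n x| ^ p - |u n x - v x| ^ p - |v x| ^ p := by rw [hhdef]
      rw [abs_le]
      constructor <;> linarith
    set g : ℕ → V → ℝ := fun n x => max (|h n x| - ε' * |u n x - v x| ^ p) 0 with hgdef
    have hg0 : ∀ n x, 0 ≤ g n x := fun n x => le_max_right _ _
    have hgle : ∀ n x, g n x ≤ (K + 1) * |v x| ^ p := by
      intro n x
      apply max_le
      · linarith [hpt n x]
      · positivity
    have hhg : ∀ n x, |h n x| ≤ g n x + ε' * |u n x - v x| ^ p := by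
      intro n x
      have := le_max_left (|h n x| - ε' * |u n x - v x| ^ p) 0
      linarith
    have hgsum : ∀ n, Summable (g n) := fun n =>
      Summable.of_nonneg_of_le (hg0 n) (hgle n) (hv.mul_left _)
    have hgtend : Tendsto (fun n => ∑' x, g n x) atTop (𝓝 0) := by
      have := tendsto_tsum_of_dominated_convergence (f := g) (g := fun _ => (0 : ℝ))
        (bound := fun x => (K + 1) * |v x| ^ p) (hv.mul_left _)
        (fun x => squeeze_zero (fun n => hg0 n x)
          (fun n => max_le (sub_le_self _ (mul_nonneg hε'.le (Real.rpow_nonneg (abs_nonneg _) p))) (abs_nonneg _))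
          (hhtend x))
        (Eventually.of_forall fun n x => by
          rw [Real.norm_eq_abs, abs_of_nonneg (hg0 n x)]; exact hgle n x)
      simpa using this
    obtain ⟨N, hN⟩ := (Metric.tendsto_atTop.mp hgtend) (ε / 2) (by positivity)
    refine ⟨N, fun n hn => ?_⟩
    have hTn : ∑' x, g n x < ε / 2 := by
      have := hN n hn
      rw [Real.dist_eq, sub_zero] at this
      calc ∑' x, g n x ≤ |∑' x, g n x| := le_abs_self _
        _ < ε / 2 := this
    have hSle : (∑' x, |h n x|) ≤ (∑' x, g n x) + ε' * D := by
      calc (∑' x, |h n x|)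
          ≤ ∑' x, (g n x + ε' * |u n x - v x| ^ p) :=
            Summable.tsum_le_tsum (hhg n) (habs n) ((hgsum n).add ((hsubsum n).mul_left _))
        _ = (∑' x, g n x) + ε' * ∑' x, |u n x - v x| ^ p := by
            rw [Summable.tsum_add (hgsum n) ((hsubsum n).mul_left _), tsum_mul_left]
        _ ≤ (∑' x, g n x) + ε' * D :=
            add_le_add_right (mul_le_mul_of_nonneg_left (hsubbdd n) hε'.le) _
    have hεD : ε' * D < ε / 2 := by
      rw [hε'def, div_mul_eq_mul_div, div_lt_div_iff₀ (by positivity) (by norm_num)]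
      nlinarith
    rw [Real.dist_eq, sub_zero, abs_of_nonneg (tsum_nonneg fun x => abs_nonneg _)]
    linarith
  -- conclude
  have key2 : Tendsto (fun n => ∑' x, h n x) atTop (𝓝 0) :=
    squeeze_zero_norm (fun n => by
      rw [Real.norm_eq_abs]
      calc |∑' x, h n x| = ‖∑' x, h n x‖ := (Real.norm_eq_abs _).symm
        _ ≤ ∑' x, ‖h n x‖ := norm_tsum_le_tsum_norm (by simpa [Real.norm_eq_abs] using habs n)
        _ = ∑' x, |h n x| := by simp [Real.norm_eq_abs]) key
  have hfun : (fun n => (∑' x, |u n x| ^ p) - ∑' x, |u n x - v x| ^ p)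
      = fun n => (∑' x, h n x) + L := by
    funext n
    rw [heq n]; ring
  rw [hfun]
  have := key2.add_const L
  simpa using this
end

section
/- Discrete Hardy inequality on the lattice: for N ≥ 3 there exists a constant κ = κ(N) > 0 such that for every finitely supported u : ℤᴺ → ℝ, ∑_{x ∈ ℤᴺ} |u(x)|²/(|x|² + 1) ≤ κ ∑_{x ∈ ℤᴺ} |∇u|²(x), where |∇u|²(x) = (1/2)∑_{y∼x}(u(y)−u(x))². -/
open Finset

set_option maxHeartbeats 1000000

namespace Hardy13

lemma le_of_sq {a b : ℝ} (ha : 0 ≤ a) (hb : 0 ≤ b) (h : a^2 ≤ b^2) : a ≤ b := by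
  nlinarith

lemma aux1 {s β R R₂ A A₂ : ℝ} (hR : 0 ≤ R) (hR2 : 0 ≤ R₂) (hA : 0 ≤ A) (hA2 : 0 ≤ A₂)
    (hRs : R^2 = s) (hR2R : R₂^2 = R) (hAs : A^2 = s + β) (hA2A : A₂^2 = A)
    (hβ : 0 ≤ β) (hβs : β ≤ (3/1000)*s) (hs : 1000000 ≤ s) :
    (A + R) * (R₂ + A₂) * A₂ ≤ 4*s + (13/5)*β := by
  have hspos : (0:ℝ) < s := by linarith
  have f1 : 2*R*A ≤ 2*s + β := by
    apply le_of_sq (by positivity) (by linarith)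
    have e : (2*R*A)^2 = 4*(R^2*A^2) := by ring
    rw [e, hRs, hAs]
    nlinarith [sq_nonneg β]
  have f2 : 4*R*R₂*A₂ ≤ 4*s + β := by
    apply le_of_sq (by positivity) (by linarith)
    have e : (4*R*R₂*A₂)^2 = 16*(R^2*(R₂^2*A₂^2)) := by ring
    rw [e, hRs, hR2R, hA2A]
    nlinarith [f1, hspos, sq_nonneg β]
  have F1 : 2*R*(A+R) ≤ 4*s + β := by nlinarith [f1, hRs]
  have F2 : 4*R*R₂*(R₂+A₂) ≤ 8*s + β := by
    have e : 4*R*R₂*(R₂+A₂) = 4*(R*R₂^2) + 4*R*R₂*A₂ := by ring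
    rw [e, hR2R, ← hRs]
    nlinarith [f2, hRs]
  have key : (2*R*(A+R)) * ((4*R*R₂*(R₂+A₂)) * (4*R*R₂*A₂)) ≤ (4*s+β) * ((8*s+β) * (4*s+β)) := by
    apply mul_le_mul F1 (mul_le_mul F2 f2 (by positivity) (by linarith)) (by positivity) (by linarith)
  have id1 : (2*R*(A+R)) * ((4*R*R₂*(R₂+A₂)) * (4*R*R₂*A₂)) = 32 * s^2 * ((A+R)*(R₂+A₂)*A₂) := by
    rw [← hRs, ← hR2R]; ring
  have hb2 : β^2 ≤ (3/1000)*s*β := by nlinarith [mul_le_mul_of_nonneg_right hβs hβ]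
  have c0 : (0:ℝ) ≤ s^2*β := by positivity
  have c1 : 16*(s*β^2) ≤ (48/1000)*(s^2*β) := by nlinarith [mul_le_mul_of_nonneg_left hb2 hspos.le]
  have hb3 : β^3 ≤ (3/1000)*(s*β^2) := by nlinarith [mul_le_mul_of_nonneg_right hb2 hβ]
  have c2 : β^3 ≤ (9/1000000)*(s^2*β) := by nlinarith [c1, hb3]
  have hfin : (4*s+β) * ((8*s+β) * (4*s+β)) ≤ 32*s^2*(4*s + (13/5)*β) := by
    nlinarith [c0, c1, c2]
  have last : 32*s^2*((A+R)*(R₂+A₂)*A₂) ≤ 32*s^2*(4*s + (13/5)*β) := by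
    rw [← id1]; linarith
  exact le_of_mul_le_mul_left (by linarith [last]) (by positivity : (0:ℝ) < 32*s^2)

lemma aux2 {s β R R₂ B B₂ : ℝ} (hR : 0 ≤ R) (hR2 : 0 ≤ R₂) (hB : 0 ≤ B) (hB2 : 0 ≤ B₂)
    (hRs : R^2 = s) (hR2R : R₂^2 = R) (hBs : B^2 = s - β) (hB2B : B₂^2 = B)
    (hβ : 0 ≤ β) (hβs : β ≤ (3/1000)*s) (hs : 1000000 ≤ s) :
    4*s - (11/4)*β ≤ (B + R) * (R₂ + B₂) * B₂ := by
  have hspos : (0:ℝ) < s := by linarith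
  have hb2 : β^2 ≤ (3/1000)*s*β := by nlinarith [mul_le_mul_of_nonneg_right hβs hβ]
  have g1 : 2*s - (21/20)*β ≤ 2*R*B := by
    apply le_of_sq (by nlinarith) (by positivity)
    have e : (2*R*B)^2 = 4*(R^2*B^2) := by ring
    rw [e, hRs, hBs]
    nlinarith [hb2]
  have g2 : 4*s - (11/10)*β ≤ 4*R*R₂*B₂ := by
    apply le_of_sq (by nlinarith) (by positivity)
    have e : (4*R*R₂*B₂)^2 = 16*(R^2*(R₂^2*B₂^2)) := by ring
    rw [e, hRs, hR2R, hB2B]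
    nlinarith [g1, hspos, hb2]
  have G1 : 4*s - (21/20)*β ≤ 2*R*(B+R) := by nlinarith [g1, hRs]
  have G2 : 8*s - (11/10)*β ≤ 4*R*R₂*(R₂+B₂) := by
    have e : 4*R*R₂*(R₂+B₂) = 4*(R*R₂^2) + 4*R*R₂*B₂ := by ring
    rw [e, hR2R, ← hRs]
    nlinarith [g2, hRs]
  have pos1 : (0:ℝ) ≤ 4*s - (21/20)*β := by nlinarith
  have pos2 : (0:ℝ) ≤ 8*s - (11/10)*β := by nlinarith
  have pos3 : (0:ℝ) ≤ 4*s - (11/10)*β := by nlinarith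
  have key : (4*s - (21/20)*β) * ((8*s - (11/10)*β) * (4*s - (11/10)*β))
      ≤ (2*R*(B+R)) * ((4*R*R₂*(R₂+B₂)) * (4*R*R₂*B₂)) := by
    apply mul_le_mul G1 (mul_le_mul G2 g2 pos3 (by positivity)) (by positivity) (by positivity)
  have id1 : (2*R*(B+R)) * ((4*R*R₂*(R₂+B₂)) * (4*R*R₂*B₂)) = 32 * s^2 * ((B+R)*(R₂+B₂)*B₂) := by
    rw [← hRs, ← hR2R]; ring
  have c0 : (0:ℝ) ≤ s^2*β := by positivity
  have c0' : (0:ℝ) ≤ s*β^2 := by positivity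
  have hb3 : β^3 ≤ (3/1000)*(s*β^2) := by nlinarith [mul_le_mul_of_nonneg_right hb2 hβ]
  have hfin : 32*s^2*(4*s - (11/4)*β) ≤ (4*s - (21/20)*β) * ((8*s - (11/10)*β) * (4*s - (11/10)*β)) := by
    nlinarith [c0, c0', hb3]
  have last : 32*s^2*(4*s - (11/4)*β) ≤ 32*s^2*((B+R)*(R₂+B₂)*B₂) := by
    rw [← id1]; linarith
  exact le_of_mul_le_mul_left (by linarith [last]) (by positivity : (0:ℝ) < 32*s^2)


lemma inv_sub_inv {R₂ A₂ : ℝ} (h1 : 0 < R₂) (h2 : 0 < A₂) :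
    R₂⁻¹ - A₂⁻¹ = (A₂^4 - R₂^4)/((A₂^2 + R₂^2)*(A₂ + R₂)*A₂*R₂) := by
  have hne : (A₂^2 + R₂^2)*(A₂+R₂)*A₂*R₂ ≠ 0 := by positivity
  field_simp
  ring

lemma branch_plus {s β : ℝ} (hs : 1000000 ≤ s) (hβ : 0 ≤ β) (hβs : β ≤ (3/1000)*s) :
    β*(4*s - (13/5)*β)/(16*s^2*Real.sqrt (Real.sqrt s))
      ≤ (Real.sqrt (Real.sqrt s))⁻¹ - (Real.sqrt (Real.sqrt (s+β)))⁻¹ := by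
  have hspos : (0:ℝ) < s := by linarith
  have hsb : (0:ℝ) < s + β := by linarith
  set R := Real.sqrt s with hRdef
  set A := Real.sqrt (s+β) with hAdef
  have hRpos : 0 < R := Real.sqrt_pos.mpr hspos
  have hApos : 0 < A := Real.sqrt_pos.mpr hsb
  set R₂ := Real.sqrt R with hR2def
  set A₂ := Real.sqrt A with hA2def
  have hR2pos : 0 < R₂ := Real.sqrt_pos.mpr hRpos
  have hA2pos : 0 < A₂ := Real.sqrt_pos.mpr hApos
  have hRs : R^2 = s := Real.sq_sqrt hspos.le
  have hAs : A^2 = s + β := Real.sq_sqrt hsb.le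
  have hR2R : R₂^2 = R := Real.sq_sqrt hRpos.le
  have hA2A : A₂^2 = A := Real.sq_sqrt hApos.le
  rw [inv_sub_inv hR2pos hA2pos]
  have hnum : A₂^4 - R₂^4 = β := by
    have e1 : A₂^4 = (A₂^2)^2 := by ring
    have e2 : R₂^4 = (R₂^2)^2 := by ring
    rw [e1, e2, hA2A, hR2R, hAs, hRs]; ring
  rw [hnum]
  have hP : (A₂^2 + R₂^2)*(A₂+R₂)*A₂ ≤ 4*s + (13/5)*β := by
    rw [hA2A, hR2R]
    have := aux1 hRpos.le hR2pos.le hApos.le hA2pos.le hRs hR2R hAs hA2A hβ hβs hs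
    calc (A + R)*(A₂+R₂)*A₂ = (A+R)*(R₂+A₂)*A₂ := by ring
    _ ≤ 4*s + (13/5)*β := this
  have hPpos : 0 < (A₂^2 + R₂^2)*(A₂+R₂)*A₂ := by positivity
  rw [div_le_div_iff₀ (by positivity) (by positivity)]
  -- β*(4s-2.6β) * ((A₂²+R₂²)(A₂+R₂)A₂*R₂) ≤ β * (16 s² R₂)
  have hkey : (4*s - (13/5)*β) * ((A₂^2 + R₂^2)*(A₂+R₂)*A₂) ≤ 16*s^2 := by
    have h1 : (0:ℝ) ≤ 4*s - (13/5)*β := by nlinarith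
    calc (4*s - (13/5)*β) * ((A₂^2 + R₂^2)*(A₂+R₂)*A₂)
        ≤ (4*s - (13/5)*β) * (4*s + (13/5)*β) := by
          exact mul_le_mul_of_nonneg_left hP h1
    _ ≤ 16*s^2 := by nlinarith [sq_nonneg β]
  calc β*(4*s - (13/5)*β) * ((A₂^2 + R₂^2)*(A₂+R₂)*A₂*R₂)
      = (β*R₂) * ((4*s - (13/5)*β) * ((A₂^2 + R₂^2)*(A₂+R₂)*A₂)) := by ring
  _ ≤ (β*R₂) * (16*s^2) := mul_le_mul_of_nonneg_left hkey (by positivity)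
  _ = β * (16*s^2*R₂) := by ring

lemma branch_minus {s β : ℝ} (hs : 1000000 ≤ s) (hβ : 0 ≤ β) (hβs : β ≤ (3/1000)*s) :
    (Real.sqrt (Real.sqrt (s-β)))⁻¹ - (Real.sqrt (Real.sqrt s))⁻¹
      ≤ β*(4*s + (281/100)*β)/(16*s^2*Real.sqrt (Real.sqrt s)) := by
  have hspos : (0:ℝ) < s := by linarith
  have hsb : (0:ℝ) < s - β := by nlinarith
  set R := Real.sqrt s with hRdef
  set B := Real.sqrt (s-β) with hBdef
  have hRpos : 0 < R := Real.sqrt_pos.mpr hspos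
  have hBpos : 0 < B := Real.sqrt_pos.mpr hsb
  set R₂ := Real.sqrt R with hR2def
  set B₂ := Real.sqrt B with hB2def
  have hR2pos : 0 < R₂ := Real.sqrt_pos.mpr hRpos
  have hB2pos : 0 < B₂ := Real.sqrt_pos.mpr hBpos
  have hRs : R^2 = s := Real.sq_sqrt hspos.le
  have hBs : B^2 = s - β := Real.sq_sqrt hsb.le
  have hR2R : R₂^2 = R := Real.sq_sqrt hRpos.le
  have hB2B : B₂^2 = B := Real.sq_sqrt hBpos.le
  rw [inv_sub_inv hB2pos hR2pos]
  have hnum : R₂^4 - B₂^4 = β := by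
    have e1 : B₂^4 = (B₂^2)^2 := by ring
    have e2 : R₂^4 = (R₂^2)^2 := by ring
    rw [e1, e2, hB2B, hR2R, hBs, hRs]; ring
  rw [hnum]
  have hQ : 4*s - (11/4)*β ≤ (R₂^2 + B₂^2)*(R₂+B₂)*B₂ := by
    rw [hB2B, hR2R]
    have := aux2 hRpos.le hR2pos.le hBpos.le hB2pos.le hRs hR2R hBs hB2B hβ hβs hs
    calc 4*s - (11/4)*β ≤ (B + R)*(R₂+B₂)*B₂ := this
    _ = (R + B)*(R₂+B₂)*B₂ := by ring
  have hQpos : 0 < 4*s - (11/4)*β := by nlinarith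
  rw [div_le_div_iff₀ (by positivity) (by positivity)]
  have hkey : 16*s^2 ≤ (4*s + (281/100)*β) * ((R₂^2 + B₂^2)*(R₂+B₂)*B₂) := by
    calc (16:ℝ)*s^2 ≤ (4*s + (281/100)*β) * (4*s - (11/4)*β) := by nlinarith [mul_le_mul_of_nonneg_right hβs hβ]
    _ ≤ (4*s + (281/100)*β) * ((R₂^2 + B₂^2)*(R₂+B₂)*B₂) := by
        exact mul_le_mul_of_nonneg_left hQ (by positivity)
  calc β * (16*s^2*R₂) = (β*R₂) * (16*s^2) := by ring
  _ ≤ (β*R₂) * ((4*s + (281/100)*β) * ((R₂^2 + B₂^2)*(R₂+B₂)*B₂)) :=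
      mul_le_mul_of_nonneg_left hkey (by positivity)
  _ = β*(4*s + (281/100)*β) * ((R₂^2 + B₂^2)*(R₂+B₂)*R₂*B₂) := by ring


lemma star' {s a : ℝ} (hs : 1000000 ≤ s) (ha0 : 0 ≤ a) (ha : a^2 ≤ s) :
    (8*s - (23*a^2 + 8))/(16*s^2*Real.sqrt (Real.sqrt s))
      ≤ 2*(Real.sqrt (Real.sqrt s))⁻¹ - (Real.sqrt (Real.sqrt (s + (2*a+1))))⁻¹
        - (Real.sqrt (Real.sqrt (s + (1-2*a))))⁻¹ := by
  have hspos : (0:ℝ) < s := by linarith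
  have haR : a ≤ (1/1000)*s := by
    apply le_of_sq ha0 (by positivity)
    nlinarith
  have hD : (0:ℝ) < 16*s^2*Real.sqrt (Real.sqrt s) := by
    have : 0 < Real.sqrt (Real.sqrt s) := Real.sqrt_pos.mpr (Real.sqrt_pos.mpr hspos)
    positivity
  rcases le_or_gt a (1/2) with hcase | hcase
  · have h1 := branch_plus hs (by linarith : (0:ℝ) ≤ 2*a+1) (by nlinarith : 2*a+1 ≤ (3/1000)*s)
    have h2 := branch_plus hs (by linarith : (0:ℝ) ≤ 1-2*a) (by nlinarith : 1-2*a ≤ (3/1000)*s)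
    have hnum : 8*s - (23*a^2 + 8)
        ≤ (2*a+1)*(4*s - (13/5)*(2*a+1)) + (1-2*a)*(4*s - (13/5)*(1-2*a)) := by
      nlinarith [sq_nonneg a]
    have hstep : (8*s - (23*a^2 + 8))/(16*s^2*Real.sqrt (Real.sqrt s))
        ≤ ((2*a+1)*(4*s - (13/5)*(2*a+1)))/(16*s^2*Real.sqrt (Real.sqrt s))
          + ((1-2*a)*(4*s - (13/5)*(1-2*a)))/(16*s^2*Real.sqrt (Real.sqrt s)) := by
      rw [← add_div]
      exact (div_le_div_iff_of_pos_right hD).mpr hnum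
    linarith [h1, h2, hstep]
  · have hb1 : (0:ℝ) ≤ 2*a+1 := by linarith
    have hb1s : 2*a+1 ≤ (3/1000)*s := by nlinarith
    have h1 := branch_plus hs hb1 hb1s
    have hb2 : (0:ℝ) ≤ 2*a-1 := by linarith
    have hb2s : 2*a-1 ≤ (3/1000)*s := by nlinarith
    have h2 := branch_minus hs hb2 hb2s
    have e : s + (1-2*a) = s - (2*a-1) := by ring
    rw [e]
    have hnum : 8*s - (23*a^2 + 8)
        ≤ (2*a+1)*(4*s - (13/5)*(2*a+1)) - (2*a-1)*(4*s + (281/100)*(2*a-1)) := by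
      nlinarith [sq_nonneg a, ha0]
    have hstep : (8*s - (23*a^2 + 8))/(16*s^2*Real.sqrt (Real.sqrt s))
        ≤ ((2*a+1)*(4*s - (13/5)*(2*a+1)))/(16*s^2*Real.sqrt (Real.sqrt s))
          - ((2*a-1)*(4*s + (281/100)*(2*a-1)))/(16*s^2*Real.sqrt (Real.sqrt s)) := by
      rw [← sub_div]
      exact (div_le_div_iff_of_pos_right hD).mpr hnum
    linarith [h1, h2, hstep]

lemma star {s a : ℝ} (hs : 1000000 ≤ s) (ha : a^2 ≤ s) :
    (8*s - (23*a^2 + 8))/(16*s^2*Real.sqrt (Real.sqrt s))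
      ≤ 2*(Real.sqrt (Real.sqrt s))⁻¹ - (Real.sqrt (Real.sqrt (s + (2*a+1))))⁻¹
        - (Real.sqrt (Real.sqrt (s + (1-2*a))))⁻¹ := by
  rcases le_or_gt 0 a with h | h
  · exact star' hs h ha
  · have := star' hs (by linarith : (0:ℝ) ≤ -a) (by nlinarith : (-a)^2 ≤ s)
    have e1 : s + (2*(-a)+1) = s + (1-2*a) := by ring
    have e2 : s + (1-2*(-a)) = s + (2*a+1) := by ring
    rw [e1, e2, neg_sq] at this
    linarith [this]


variable {N : ℕ}

def nbr (x : Fin N → ℤ) (p : Fin N × Bool) : Fin N → ℤ :=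
  Function.update x p.1 (x p.1 + (if p.2 then 1 else -1))

lemma nbr_apply_self (x : Fin N → ℤ) (p : Fin N × Bool) :
    nbr x p p.1 = x p.1 + (if p.2 then 1 else -1) := by
  simp [nbr]

lemma nbr_apply_ne (x : Fin N → ℤ) (p : Fin N × Bool) {j : Fin N} (h : j ≠ p.1) :
    nbr x p j = x j := by
  simp [nbr, Function.update_of_ne h]

lemma nbr_nbr (x : Fin N → ℤ) (p : Fin N × Bool) : nbr (nbr x p) (p.1, !p.2) = x := by
  funext j
  by_cases h : j = p.1
  · subst h
    rw [nbr_apply_self (p := (p.1, !p.2))]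
    simp only [nbr]
    rcases p with ⟨i, b⟩
    cases b <;> simp
  · rw [nbr_apply_ne (nbr x p) (p.1, !p.2) h, nbr_apply_ne x p h]

lemma nbr_dist (x : Fin N → ℤ) (p : Fin N × Bool) : ∑ i, |nbr x p i - x i| = 1 := by
  rw [Finset.sum_eq_single p.1]
  · rw [nbr_apply_self]
    rcases p with ⟨i, b⟩
    cases b <;> simp
  · intro j _ hj
    rw [nbr_apply_ne _ _ hj]
    simp
  · simp

lemma nbr_inj (x : Fin N → ℤ) : Function.Injective (nbr x) := by
  intro p q h
  rcases p with ⟨i, b⟩; rcases q with ⟨j, c⟩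
  by_cases hij : i = j
  · subst hij
    have := congrFun h i
    rw [nbr_apply_self (p := (i,b)), nbr_apply_self (p := (i,c))] at this
    cases b <;> cases c <;> simp_all <;> omega
  · have h1 := congrFun h i
    rw [nbr_apply_self (p := (i,b)), nbr_apply_ne (p := (j,c)) (j := i) x (by simpa using hij)] at h1
    cases b <;> simp at h1 <;> omega

lemma dist_one_exists {x y : Fin N → ℤ} (h : ∑ i, |y i - x i| = 1) :
    ∃ p : Fin N × Bool, nbr x p = y := by
  have hnz : ∃ i : Fin N, |y i - x i| ≠ 0 := by
    by_contra hc
    push_neg at hc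
    rw [Finset.sum_eq_zero (fun i _ => hc i)] at h
    omega
  obtain ⟨i, hi⟩ := hnz
  have hge : 1 ≤ |y i - x i| := by
    have := abs_nonneg (y i - x i); omega
  have hsplit : |y i - x i| + ∑ j ∈ univ.erase i, |y j - x j| = 1 := by
    have := Finset.add_sum_erase univ (fun j => |y j - x j|) (mem_univ i)
    rw [h] at this; exact this
  have hrest : ∑ j ∈ univ.erase i, |y j - x j| = 0 := by
    have : 0 ≤ ∑ j ∈ univ.erase i, |y j - x j| :=
      Finset.sum_nonneg (fun j _ => abs_nonneg _)
    omega
  have hothers : ∀ j, j ≠ i → y j = x j := by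
    intro j hj
    have := (Finset.sum_eq_zero_iff_of_nonneg (fun k _ => abs_nonneg (y k - x k))).mp hrest j
      (Finset.mem_erase.mpr ⟨hj, mem_univ j⟩)
    exact sub_eq_zero.mp (abs_eq_zero.mp this)
  have hone : |y i - x i| = 1 := by omega
  rcases abs_eq (by norm_num : (0:ℤ) ≤ 1) |>.mp hone with h1 | h1
  · refine ⟨(i, true), ?_⟩
    funext j
    by_cases hj : j = i
    · subst hj; rw [nbr_apply_self]; simp; omega
    · rw [nbr_apply_ne _ _ hj, hothers j hj]
  · refine ⟨(i, false), ?_⟩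
    funext j
    by_cases hj : j = i
    · subst hj; rw [nbr_apply_self]; simp; omega
    · rw [nbr_apply_ne _ _ hj, hothers j hj]

noncomputable def nbrEquiv (x : Fin N → ℤ) :
    (Fin N × Bool) ≃ {y : Fin N → ℤ // (∑ i, |y i - x i|) = 1} :=
  Equiv.ofBijective (fun p => ⟨nbr x p, nbr_dist x p⟩)
    ⟨fun p q h => nbr_inj x (by simpa using congrArg Subtype.val h),
     fun y => by
      obtain ⟨p, hp⟩ := dist_one_exists y.2
      exact ⟨p, Subtype.ext hp⟩⟩


noncomputable def Cc (N : ℕ) : ℝ := 1000000*(N+1)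

lemma Cc_ge (N : ℕ) : 1000000 ≤ Cc N := by
  have : (0:ℝ) ≤ (N:ℝ) := Nat.cast_nonneg N
  unfold Cc; nlinarith

lemma Cc_pos (N : ℕ) : 0 < Cc N := lt_of_lt_of_le (by norm_num) (Cc_ge N)

noncomputable def S (N : ℕ) (x : Fin N → ℤ) : ℝ := (∑ i, ((x i : ℝ))^2) + Cc N

lemma S_ge (x : Fin N → ℤ) : Cc N ≤ S N x := by
  unfold S
  have : 0 ≤ ∑ i, ((x i : ℝ))^2 := Finset.sum_nonneg (fun i _ => sq_nonneg _)
  linarith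

lemma S_ge' (x : Fin N → ℤ) : 1000000 ≤ S N x := le_trans (Cc_ge N) (S_ge x)

lemma S_pos (x : Fin N → ℤ) : 0 < S N x := lt_of_lt_of_le (by norm_num) (S_ge' x)

noncomputable def phi (N : ℕ) (x : Fin N → ℤ) : ℝ := (Real.sqrt (Real.sqrt (S N x)))⁻¹

lemma phi_pos (x : Fin N → ℤ) : 0 < phi N x := by
  unfold phi
  have := S_pos x
  have : 0 < Real.sqrt (Real.sqrt (S N x)) := Real.sqrt_pos.mpr (Real.sqrt_pos.mpr this)
  positivity

lemma sum_sq_update (x : Fin N → ℤ) (i : Fin N) (v : ℤ) :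
    (∑ j, ((Function.update x i v j : ℤ) : ℝ)^2)
      = (∑ j, ((x j : ℝ))^2) + ((v:ℝ)^2 - ((x i : ℝ))^2) := by
  have e : ∀ j, ((Function.update x i v j : ℤ) : ℝ)^2
      = Function.update (fun j => ((x j : ℝ))^2) i ((v:ℝ)^2) j := by
    intro j
    by_cases h : j = i
    · subst h; simp
    · simp [Function.update_of_ne h]
  rw [Finset.sum_congr rfl (fun j _ => e j)]
  rw [Finset.sum_update_of_mem (mem_univ i)]
  have : ∑ j, ((x j:ℝ))^2 = ((x i:ℝ))^2 + ∑ j ∈ univ \ {i}, ((x j:ℝ))^2 := by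
    rw [Finset.sum_eq_sum_sdiff_singleton_add (mem_univ i) (fun j => ((x j:ℝ))^2)]
    ring
  rw [this]; ring

lemma S_nbr_true (x : Fin N → ℤ) (i : Fin N) :
    S N (nbr x (i, true)) = S N x + (2*((x i : ℝ)) + 1) := by
  unfold S nbr
  simp only
  rw [sum_sq_update]
  push_cast
  ring

lemma S_nbr_false (x : Fin N → ℤ) (i : Fin N) :
    S N (nbr x (i, false)) = S N x + (1 - 2*((x i : ℝ))) := by
  unfold S nbr
  simp only
  rw [sum_sq_update]
  push_cast
  ring

lemma sq_le_S (x : Fin N → ℤ) (i : Fin N) : ((x i : ℝ))^2 ≤ S N x := by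
  unfold S
  have h1 : ((x i:ℝ))^2 ≤ ∑ j, ((x j:ℝ))^2 :=
    Finset.single_le_sum (fun j _ => sq_nonneg ((x j:ℝ))) (mem_univ i)
  have := Cc_pos N
  linarith

lemma neg_lap_ge (hN : 3 ≤ N) (x : Fin N → ℤ) :
    1/(16 * S N x * Real.sqrt (Real.sqrt (S N x)))
      ≤ ∑ p : Fin N × Bool, (phi N x - phi N (nbr x p)) := by
  set s := S N x with hsdef
  have hs : 1000000 ≤ s := S_ge' x
  have hspos : 0 < s := S_pos x
  have hR2pos : 0 < Real.sqrt (Real.sqrt s) := Real.sqrt_pos.mpr (Real.sqrt_pos.mpr hspos)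
  rw [Fintype.sum_prod_type]
  have hterm : ∀ i : Fin N,
      (8*s - (23*((x i:ℝ))^2 + 8))/(16*s^2*Real.sqrt (Real.sqrt s))
        ≤ ∑ b : Bool, (phi N x - phi N (nbr x (i, b))) := by
    intro i
    rw [Fintype.sum_bool]
    have e1 : phi N (nbr x (i, true)) = (Real.sqrt (Real.sqrt (s + (2*((x i:ℝ))+1))))⁻¹ := by
      unfold phi; rw [S_nbr_true]
    have e2 : phi N (nbr x (i, false)) = (Real.sqrt (Real.sqrt (s + (1-2*((x i:ℝ))))))⁻¹ := by
      unfold phi; rw [S_nbr_false]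
    have hphix : phi N x = (Real.sqrt (Real.sqrt s))⁻¹ := rfl
    rw [e1, e2, hphix]
    have := star (a := ((x i:ℝ))) hs (sq_le_S x i)
    linarith [this]
  have hsum := Finset.sum_le_sum (fun i (_ : i ∈ univ) => hterm i)
  refine le_trans ?_ hsum
  rw [← Finset.sum_div]
  have hnum : ∑ i, (8*s - (23*((x i:ℝ))^2 + 8)) = 8*N*s - 23*(s - Cc N) - 8*N := by
    rw [Finset.sum_sub_distrib]
    have h1 : ∑ _i : Fin N, 8*s = 8*N*s := by
      rw [Finset.sum_const]; simp; ring
    have h2 : ∑ i, (23*((x i:ℝ))^2 + 8) = 23*(s - Cc N) + 8*N := by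
      rw [Finset.sum_add_distrib, ← Finset.mul_sum]
      have : ∑ i, ((x i:ℝ))^2 = s - Cc N := by rw [hsdef]; unfold S; ring
      rw [this, Finset.sum_const]
      simp
      ring
    rw [h1, h2]
    ring
  rw [hnum]
  have hN' : (3:ℝ) ≤ (N:ℝ) := by exact_mod_cast hN
  have hCc : 1000000*((N:ℝ)+1) = Cc N := rfl
  have hnum_ge : s ≤ 8*N*s - 23*(s - Cc N) - 8*N := by
    have hC := Cc_ge N
    nlinarith [hspos, hs]
  have hfrac : 1/(16*s*Real.sqrt (Real.sqrt s)) = s/(16*s^2*Real.sqrt (Real.sqrt s)) := by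
    field_simp
  rw [hfrac]
  exact (div_le_div_iff_of_pos_right (by positivity)).mpr hnum_ge


lemma sumsq_le_sqsum (f : Fin N → ℝ) (h : ∀ i, 0 ≤ f i) : ∑ i, (f i)^2 ≤ (∑ i, f i)^2 := by
  calc ∑ i, (f i)^2 ≤ ∑ i, f i * ∑ j, f j := by
        apply Finset.sum_le_sum
        intro i _
        have h1 : f i ≤ ∑ j, f j := Finset.single_le_sum (fun j _ => h j) (mem_univ i)
        nlinarith [h i]
  _ = (∑ i, f i)^2 := by rw [← Finset.sum_mul]; ring

lemma S_le_weight (x : Fin N → ℤ) :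
    S N x ≤ Cc N * (((∑ i, |x i| : ℤ) : ℝ)^2 + 1) := by
  have h1 : ∑ i, ((x i:ℝ))^2 ≤ (((∑ i, |x i| : ℤ) : ℝ))^2 := by
    have e : (((∑ i, |x i| : ℤ) : ℝ)) = ∑ i, |((x i:ℝ))| := by
      push_cast; rfl
    rw [e]
    have h2 : ∀ i, ((x i:ℝ))^2 = (|((x i:ℝ))|)^2 := fun i => (sq_abs _).symm
    calc ∑ i, ((x i:ℝ))^2 = ∑ i, (|((x i:ℝ))|)^2 := Finset.sum_congr rfl (fun i _ => h2 i)
    _ ≤ (∑ i, |((x i:ℝ))|)^2 := sumsq_le_sqsum _ (fun i => abs_nonneg _)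
  have hC1 : (1:ℝ) ≤ Cc N := le_trans (by norm_num) (Cc_ge N)
  have hsq : (0:ℝ) ≤ (((∑ i, |x i| : ℤ) : ℝ))^2 := sq_nonneg _
  unfold S
  nlinarith

lemma claim1 (hN : 3 ≤ N) (u : (Fin N → ℤ) → ℝ) (x : Fin N → ℤ) :
    (u x)^2 / (((∑ i, |x i| : ℤ) : ℝ)^2 + 1)
      ≤ (16 * Cc N) * ((∑ p : Fin N × Bool, (phi N x - phi N (nbr x p))) * (u x)^2 / phi N x) := by
  set s := S N x with hsdef
  set W := (((∑ i, |x i| : ℤ) : ℝ)^2 + 1) with hWdef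
  have hWpos : 0 < W := by positivity
  have hspos : 0 < s := S_pos x
  have hR2pos : 0 < Real.sqrt (Real.sqrt s) := Real.sqrt_pos.mpr (Real.sqrt_pos.mpr hspos)
  have hphi : phi N x = (Real.sqrt (Real.sqrt s))⁻¹ := rfl
  have hphipos : 0 < phi N x := phi_pos x
  have hsW : s ≤ Cc N * W := S_le_weight x
  have hCpos := Cc_pos N
  -- step 1 : u^2 / W ≤ Cc * u^2 / s
  have step1 : (u x)^2 / W ≤ Cc N * (u x)^2 / s := by
    rw [div_le_div_iff₀ hWpos hspos]
    calc (u x)^2 * s ≤ (u x)^2 * (Cc N * W) := by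
          exact mul_le_mul_of_nonneg_left hsW (sq_nonneg _)
    _ = Cc N * (u x)^2 * W := by ring
  refine le_trans step1 ?_
  -- step 2
  have hlap := neg_lap_ge hN x
  have e1 : (∑ p : Fin N × Bool, (phi N x - phi N (nbr x p))) * (u x)^2 / phi N x
      = (∑ p : Fin N × Bool, (phi N x - phi N (nbr x p))) * ((u x)^2 * Real.sqrt (Real.sqrt s)) := by
    rw [hphi]
    field_simp
  rw [e1]
  have step2 : Cc N * (u x)^2 / s
      ≤ (16 * Cc N) * ((1/(16 * s * Real.sqrt (Real.sqrt s))) * ((u x)^2 * Real.sqrt (Real.sqrt s))) := by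
    have e2 : (16 * Cc N) * ((1/(16 * s * Real.sqrt (Real.sqrt s))) * ((u x)^2 * Real.sqrt (Real.sqrt s)))
        = Cc N * (u x)^2 / s := by
      field_simp
    rw [e2]
  refine le_trans step2 ?_
  apply mul_le_mul_of_nonneg_left _ (by positivity : (0:ℝ) ≤ 16 * Cc N)
  exact mul_le_mul_of_nonneg_right hlap (by positivity)


lemma sum_nbr_swap (A : Finset (Fin N → ℤ)) (g : (Fin N → ℤ) → (Fin N → ℤ) → ℝ)
    (h1 : ∀ x p, x ∉ A → g x (nbr x p) = 0)
    (h2 : ∀ x p, x ∉ A → g (nbr x p) x = 0) :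
    ∑ x ∈ A, ∑ p : Fin N × Bool, g x (nbr x p)
      = ∑ x ∈ A, ∑ p : Fin N × Bool, g (nbr x p) x := by
  classical
  set σ : ((Fin N → ℤ) × (Fin N × Bool)) → ((Fin N → ℤ) × (Fin N × Bool)) :=
    fun q => (nbr q.1 q.2, (q.2.1, !q.2.2)) with hσdef
  have hσσ : ∀ q, σ (σ q) = q := by
    rintro ⟨x, i, b⟩
    simp only [hσdef]
    rw [nbr_nbr]
    simp
  set s₀ : Finset ((Fin N → ℤ) × (Fin N × Bool)) := A ×ˢ (univ : Finset (Fin N × Bool)) with hs₀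
  set C : Finset ((Fin N → ℤ) × (Fin N × Bool)) := s₀ ∪ s₀.image σ with hC
  have hCclosed : ∀ q ∈ C, σ q ∈ C := by
    intro q hq
    rw [hC, Finset.mem_union] at hq ⊢
    rcases hq with hq | hq
    · right; exact Finset.mem_image_of_mem σ hq
    · left
      obtain ⟨r, hr, hrq⟩ := Finset.mem_image.mp hq
      rw [← hrq, hσσ]
      exact hr
  have hmem : ∀ q : ((Fin N → ℤ) × (Fin N × Bool)), q ∈ s₀ ↔ q.1 ∈ A := by
    intro q
    rw [hs₀, Finset.mem_product]
    simp
  have hFC : ∑ q ∈ C, g q.1 (nbr q.1 q.2) = ∑ q ∈ s₀, g q.1 (nbr q.1 q.2) := by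
    symm
    apply Finset.sum_subset (Finset.subset_union_left)
    intro q _ hq
    exact h1 q.1 q.2 (fun hA => hq ((hmem q).mpr hA))
  have hGC : ∑ q ∈ C, g (nbr q.1 q.2) q.1 = ∑ q ∈ s₀, g (nbr q.1 q.2) q.1 := by
    symm
    apply Finset.sum_subset (Finset.subset_union_left)
    intro q _ hq
    exact h2 q.1 q.2 (fun hA => hq ((hmem q).mpr hA))
  have hswap : ∑ q ∈ C, g q.1 (nbr q.1 q.2) = ∑ q ∈ C, g (nbr q.1 q.2) q.1 := by
    apply Finset.sum_nbij' σ σ hCclosed hCclosed (fun q _ => hσσ q) (fun q _ => hσσ q)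
    intro q hq
    rcases q with ⟨x, p⟩
    simp only [hσdef]
    rw [nbr_nbr]
  have e1 : ∑ x ∈ A, ∑ p : Fin N × Bool, g x (nbr x p) = ∑ q ∈ s₀, g q.1 (nbr q.1 q.2) := by
    rw [hs₀, Finset.sum_product]
  have e2 : ∑ x ∈ A, ∑ p : Fin N × Bool, g (nbr x p) x = ∑ q ∈ s₀, g (nbr q.1 q.2) q.1 := by
    rw [hs₀, Finset.sum_product]
  rw [e1, e2, ← hFC, ← hGC, hswap]

lemma claim2 (u : (Fin N → ℤ) → ℝ) (A : Finset (Fin N → ℤ))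
    (hA1 : ∀ x, u x ≠ 0 → x ∈ A)
    (hA2 : ∀ x p, u (nbr x p) ≠ 0 → x ∈ A) :
    ∑ x ∈ A, (∑ p : Fin N × Bool, (phi N x - phi N (nbr x p))) * (u x)^2 / phi N x
      ≤ (1/2) * ∑ x ∈ A, ∑ p : Fin N × Bool, (u (nbr x p) - u x)^2 := by
  classical
  set v : (Fin N → ℤ) → ℝ := fun x => u x / phi N x with hvdef
  have hphine : ∀ x, phi N x ≠ 0 := fun x => (phi_pos x).ne'
  have huv : ∀ x, u x = phi N x * v x := by
    intro x
    rw [hvdef]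
    field_simp [hphine x]
  have hv0 : ∀ x, u x = 0 → v x = 0 := by
    intro x h
    rw [hvdef]; simp [h]
  set gg : (Fin N → ℤ) → (Fin N → ℤ) → ℝ :=
    fun x y => (phi N y - phi N x) * phi N y * (v y)^2 with hggdef
  have hpoint : ∀ x p, (u (nbr x p) - u x)^2
      = phi N x * phi N (nbr x p) * (v (nbr x p) - v x)^2
        + (gg x (nbr x p) + gg (nbr x p) x) := by
    intro x p
    rw [huv x, huv (nbr x p)]
    simp only [hggdef]
    ring
  have hsplit : ∑ x ∈ A, ∑ p : Fin N × Bool, (u (nbr x p) - u x)^2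
      = (∑ x ∈ A, ∑ p : Fin N × Bool, phi N x * phi N (nbr x p) * (v (nbr x p) - v x)^2)
        + ((∑ x ∈ A, ∑ p : Fin N × Bool, gg x (nbr x p))
            + (∑ x ∈ A, ∑ p : Fin N × Bool, gg (nbr x p) x)) := by
    rw [← Finset.sum_add_distrib, ← Finset.sum_add_distrib]
    apply Finset.sum_congr rfl
    intro x _
    rw [← Finset.sum_add_distrib, ← Finset.sum_add_distrib]
    exact Finset.sum_congr rfl (fun p _ => hpoint x p)
  have hswap : ∑ x ∈ A, ∑ p : Fin N × Bool, gg x (nbr x p)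
      = ∑ x ∈ A, ∑ p : Fin N × Bool, gg (nbr x p) x := by
    apply sum_nbr_swap
    · intro x p hx
      simp only [hggdef]
      by_cases h : u (nbr x p) = 0
      · rw [hv0 _ h]; ring
      · exact absurd (hA2 x p h) hx
    · intro x p hx
      simp only [hggdef]
      by_cases h : u x = 0
      · rw [hv0 _ h]; ring
      · exact absurd (hA1 x h) hx
  have hrho : ∀ x, (∑ p : Fin N × Bool, (phi N x - phi N (nbr x p))) * (u x)^2 / phi N x
      = ∑ p : Fin N × Bool, gg (nbr x p) x := by
    intro x
    have hx : (u x)^2/phi N x = phi N x * (v x)^2 := by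
      rw [huv x]
      field_simp [hphine x]
    rw [mul_div_assoc, hx, Finset.sum_mul]
    apply Finset.sum_congr rfl
    intro p _
    simp only [hggdef]
    ring
  have hrhosum : ∑ x ∈ A, (∑ p : Fin N × Bool, (phi N x - phi N (nbr x p))) * (u x)^2 / phi N x
      = ∑ x ∈ A, ∑ p : Fin N × Bool, gg (nbr x p) x :=
    Finset.sum_congr rfl (fun x _ => hrho x)
  have ht1 : 0 ≤ ∑ x ∈ A, ∑ p : Fin N × Bool, phi N x * phi N (nbr x p) * (v (nbr x p) - v x)^2 := by
    apply Finset.sum_nonneg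
    intro x _
    apply Finset.sum_nonneg
    intro p _
    exact mul_nonneg (mul_nonneg (phi_pos x).le (phi_pos (nbr x p)).le) (sq_nonneg _)
  rw [hrhosum]
  rw [hswap] at hsplit
  linarith [hsplit, ht1]

end Hardy13

open Hardy13

theorem stmt13 (N : ℕ) (hN : 3 ≤ N) :
    ∃ κ > (0:ℝ), ∀ u : (Fin N → ℤ) → ℝ, (Function.support u).Finite →
      (∑' x : Fin N → ℤ, (u x) ^ 2 / (((∑ i, |x i| : ℤ) : ℝ) ^ 2 + 1))
        ≤ κ * ∑' x : Fin N → ℤ,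
            (1 / 2 : ℝ) * ∑' y : {y : Fin N → ℤ // (∑ i, |y i - x i|) = 1}, (u y.1 - u x) ^ 2 := by
  classical
  refine ⟨16 * Cc N, by have := Cc_pos N; positivity, ?_⟩
  intro u hu
  have hinner : ∀ x : Fin N → ℤ,
      (∑' y : {y : Fin N → ℤ // (∑ i, |y i - x i|) = 1}, (u y.1 - u x)^2)
        = ∑ p : Fin N × Bool, (u (nbr x p) - u x)^2 := by
    intro x
    rw [← Equiv.tsum_eq (nbrEquiv x) (fun y => (u y.1 - u x)^2), tsum_fintype]
    exact Finset.sum_congr rfl (fun p _ => rfl)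
  have hrw : (∑' x : Fin N → ℤ,
      (1 / 2 : ℝ) * ∑' y : {y : Fin N → ℤ // (∑ i, |y i - x i|) = 1}, (u y.1 - u x) ^ 2)
      = ∑' x : Fin N → ℤ, (1 / 2 : ℝ) * ∑ p : Fin N × Bool, (u (nbr x p) - u x)^2 := by
    congr 1
    funext x
    rw [hinner x]
  rw [hrw]
  set A : Finset (Fin N → ℤ) :=
    hu.toFinset ∪ hu.toFinset.biUnion
      (fun z => Finset.image (fun p : Fin N × Bool => nbr z p) Finset.univ) with hAdef
  have hA1 : ∀ x, u x ≠ 0 → x ∈ A := fun x hx =>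
    Finset.mem_union_left _ (hu.mem_toFinset.mpr hx)
  have hA2 : ∀ x p, u (nbr x p) ≠ 0 → x ∈ A := by
    intro x p h
    apply Finset.mem_union_right
    apply Finset.mem_biUnion.mpr
    refine ⟨nbr x p, hu.mem_toFinset.mpr h, ?_⟩
    apply Finset.mem_image.mpr
    exact ⟨(p.1, !p.2), Finset.mem_univ _, nbr_nbr x p⟩
  have hL : (∑' x : Fin N → ℤ, (u x)^2 / (((∑ i, |x i| : ℤ):ℝ)^2 + 1))
      = ∑ x ∈ A, (u x)^2 / (((∑ i, |x i| : ℤ):ℝ)^2 + 1) := by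
    apply tsum_eq_sum
    intro x hx
    have hux : u x = 0 := by by_contra h; exact hx (hA1 x h)
    rw [hux]
    simp
  have hR : (∑' x : Fin N → ℤ, (1/2:ℝ) * ∑ p : Fin N × Bool, (u (nbr x p) - u x)^2)
      = ∑ x ∈ A, (1/2:ℝ) * ∑ p : Fin N × Bool, (u (nbr x p) - u x)^2 := by
    apply tsum_eq_sum
    intro x hx
    have hux : u x = 0 := by by_contra h; exact hx (hA1 x h)
    have hn : ∀ p : Fin N × Bool, u (nbr x p) = 0 := by
      intro p; by_contra h; exact hx (hA2 x p h)
    rw [hux]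
    simp [hn]
  rw [hL, hR]
  have hpt := fun (x : Fin N → ℤ) => claim1 hN u x
  have hsum1 : ∑ x ∈ A, (u x)^2 / (((∑ i, |x i| : ℤ):ℝ)^2 + 1)
      ≤ ∑ x ∈ A, (16 * Cc N) * ((∑ p : Fin N × Bool, (phi N x - phi N (nbr x p))) * (u x)^2 / phi N x) :=
    Finset.sum_le_sum (fun x _ => hpt x)
  have hsum2 : ∑ x ∈ A, (16 * Cc N) * ((∑ p : Fin N × Bool, (phi N x - phi N (nbr x p))) * (u x)^2 / phi N x)
      = (16 * Cc N) * ∑ x ∈ A, ((∑ p : Fin N × Bool, (phi N x - phi N (nbr x p))) * (u x)^2 / phi N x) := by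
    rw [Finset.mul_sum]
  have hc2 := claim2 u A hA1 hA2
  have hfin : (16 * Cc N) * ∑ x ∈ A, ((∑ p : Fin N × Bool, (phi N x - phi N (nbr x p))) * (u x)^2 / phi N x)
      ≤ (16 * Cc N) * ((1/2) * ∑ x ∈ A, ∑ p : Fin N × Bool, (u (nbr x p) - u x)^2) := by
    apply mul_le_mul_of_nonneg_left hc2
    have := Cc_pos N
    positivity
  have hlast : ∑ x ∈ A, (1/2:ℝ) * ∑ p : Fin N × Bool, (u (nbr x p) - u x)^2
      = (1/2) * ∑ x ∈ A, ∑ p : Fin N × Bool, (u (nbr x p) - u x)^2 := by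
    rw [Finset.mul_sum]
  rw [hlast]
  calc ∑ x ∈ A, (u x)^2 / (((∑ i, |x i| : ℤ):ℝ)^2 + 1)
      ≤ (16 * Cc N) * ∑ x ∈ A, ((∑ p : Fin N × Bool, (phi N x - phi N (nbr x p))) * (u x)^2 / phi N x) := by
        rw [← hsum2]; exact hsum1
  _ ≤ (16 * Cc N) * ((1/2) * ∑ x ∈ A, ∑ p : Fin N × Bool, (u (nbr x p) - u x)^2) := hfin
end
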